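/- arXiv:1601.04637 — 2 statements merged into one kernel-verified Lean document; each statement's English description precedes it below -/
import Mathlib

section
/- Let X be a nonnegative random variable with tail F̄ ∈ RV_{−α}, and write F̄(x) = x^{−α} L(x) with L slowly varying. Then L must be of one of the following forms: (i) L(x) = c(x); (ii) L(x) = c(x)/P[V > log x]; (iii) L(x) = c(x) P[U > log x]; (iv) L(x) = c(x) P[U > log x]/P[V > log x]; where U and V are long-tailed random variables and c(x) → c ∈ (0, ∞) as x → ∞. -/
open MeasureTheory ProbabilityTheory Filter Set
open scoped ENNReal Topology

noncomputable section

/-- The tail function `x ↦ P[X > x]` of a random variable `X`. -/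
def rvTail {Ω : Type*} [MeasurableSpace Ω] (P : Measure Ω) (X : Ω → ℝ) (x : ℝ) : ℝ :=
  (P {ω | x < X ω}).toReal

/-- `X` is regularly varying with index `-α`:
`P[X > xy]/P[X > x] → y^{-α}` as `x → ∞`, for every `y > 0`. -/
def RegVar {Ω : Type*} [MeasurableSpace Ω] (P : Measure Ω) (X : Ω → ℝ) (α : ℝ) : Prop :=
  ∀ y : ℝ, 0 < y →
    Tendsto (fun x => rvTail P X (x * y) / rvTail P X x) atTop (𝓝 (y ^ (-α)))

/-- The support of a (law) measure on `ℝ`: points all of whose neighbourhoods are charged. -/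
def measSupport (μ : Measure ℝ) : Set ℝ :=
  {x | ∀ ε > 0, μ (Set.Ioo (x - ε) (x + ε)) ≠ 0}

/-- `(X, Y)` follows a bivariate Sarmanov distribution with parameter `θ`
and kernels `φ1, φ2`:  the joint law of `(X,Y)` is
`(1 + θ φ1(x) φ2(y)) F(dx) G(dy)`, where `F`, `G` are the marginal laws,
`E[φ1(X)] = E[φ2(Y)] = 0` and `1 + θ φ1(x) φ2(y) ≥ 0` on `D_X × D_Y`,
and `Y ≥ 0`. -/
structure Sarmanov {Ω : Type*} [MeasurableSpace Ω] (P : Measure Ω)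
    (X Y : Ω → ℝ) (θ : ℝ) (φ1 φ2 : ℝ → ℝ) : Prop where
  measurable_X : Measurable X
  measurable_Y : Measurable Y
  measurable_φ1 : Measurable φ1
  measurable_φ2 : Measurable φ2
  nonneg_Y : ∀ ω, 0 ≤ Y ω
  joint : P.map (fun ω => (X ω, Y ω)) =
    ((P.map X).prod (P.map Y)).withDensity
      (fun p => ENNReal.ofReal (1 + θ * φ1 p.1 * φ2 p.2))
  mean_φ1 : ∫ ω, φ1 (X ω) ∂P = 0
  mean_φ2 : ∫ ω, φ2 (Y ω) ∂P = 0
  density_nonneg : ∀ x ∈ measSupport (P.map X), ∀ y ∈ measSupport (P.map Y),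
    0 ≤ 1 + θ * φ1 x * φ2 y

/-- A function `L : ℝ → ℝ` is slowly varying (at infinity). -/
def SlowlyVarying (L : ℝ → ℝ) : Prop :=
  ∀ t : ℝ, 0 < t → Tendsto (fun x => L (x * t) / L x) atTop (𝓝 1)

/-- `T` is the tail function of some random variable (i.e. of some probability law on `ℝ`). -/
def IsTailFun (T : ℝ → ℝ) : Prop :=
  ∃ μ : Measure ℝ, IsProbabilityMeasure μ ∧ ∀ x, T x = (μ (Set.Ioi x)).toReal

/-- `T` is the tail function of a long-tailed random variable:
`P[U > x + y] ~ P[U > x]` as `x → ∞` for every `y`. -/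
def LongTailedFun (T : ℝ → ℝ) : Prop :=
  IsTailFun T ∧ ∀ y : ℝ, Tendsto (fun x => T (x + y) / T x) atTop (𝓝 1)

/-- `f` is a subexponential density:
`∫_0^x f(x-y) f(y)/f(x) dy → 2 ∫_0^∞ f(u) du < ∞` as `x → ∞`. -/
def SubexpDensity (f : ℝ → ℝ) : Prop :=
  (∀ x, 0 ≤ f x) ∧ IntegrableOn f (Set.Ioi 0) ∧
    Tendsto (fun x => (∫ y in Set.Ioc (0:ℝ) x, f (x - y) * f y) / f x) atTop
      (𝓝 (2 * ∫ u in Set.Ioi (0:ℝ), f u))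

/-- `L` is of type (iii), with `TU` the tail of the long-tailed random variable `U`:
`L(x) = c(x) P[U > log x]` with `c(x) → c₀ ∈ (0,∞)`. -/
def TypeThree (L TU : ℝ → ℝ) : Prop :=
  ∃ (c : ℝ → ℝ) (c₀ : ℝ), 0 < c₀ ∧ Tendsto c atTop (𝓝 c₀) ∧
    LongTailedFun TU ∧ ∀ x ≥ 1, L x = c x * TU (Real.log x)

/-- `L` is of type (iv), with `TU` the tail of the long-tailed random variable `U`:
`L(x) = c(x) P[U > log x] / P[V > log x]` with `c(x) → c₀ ∈ (0,∞)`, `V` long-tailed. -/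
def TypeFour (L TU : ℝ → ℝ) : Prop :=
  ∃ (c : ℝ → ℝ) (c₀ : ℝ) (TV : ℝ → ℝ), 0 < c₀ ∧ Tendsto c atTop (𝓝 c₀) ∧
    LongTailedFun TU ∧ LongTailedFun TV ∧
    ∀ x ≥ 1, L x = c x * TU (Real.log x) / TV (Real.log x)

/-- Truncated moment `m(x) = ∫_0^x v^α F(dv) = E[X^α 1_{X ≤ x}]`. -/
def mTrunc {Ω : Type*} [MeasurableSpace Ω] (P : Measure Ω) (X : Ω → ℝ) (α : ℝ)
    (x : ℝ) : ℝ :=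
  ∫ ω in {ω | X ω ≤ x}, X ω ^ α ∂P

/-- Condition (DZ1): `lim_{x→∞} sup_{y ∈ [1,x]} L(y)/L(x) < ∞`. -/
def DZ1cond (L : ℝ → ℝ) : Prop :=
  ∃ M : ℝ, ∀ᶠ x : ℝ in atTop, ∀ y ∈ Set.Icc (1:ℝ) x, L y / L x ≤ M

/-- Condition (DZ2): `L` is of type (iii) or (iv), and `x ↦ L(eˣ)` is a
subexponential density. -/
def DZ2cond (L : ℝ → ℝ) : Prop :=
  (∃ TU, TypeThree L TU ∨ TypeFour L TU) ∧ SubexpDensity (fun u => L (Real.exp u))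

/-- Condition (DZ3): `L` is of type (iii) or (iv), `U ∈ S*` (its tail is a
subexponential density), and `P[Y > x] = o(x^{-α} P[U > log x])`. -/
def DZ3cond {Ω : Type*} [MeasurableSpace Ω] (P : Measure Ω) (Y : Ω → ℝ)
    (α : ℝ) (L : ℝ → ℝ) : Prop :=
  ∃ TU, (TypeThree L TU ∨ TypeFour L TU) ∧ SubexpDensity TU ∧
    (rvTail P Y) =o[atTop] (fun x => x ^ (-α) * TU (Real.log x))

/-- Condition (DZ4): `E[X^α] = ∞`, `P[Y > x] = o(P[X > x]/m(x))` and
`limsup_{x→∞} sup_{√x ≤ y ≤ x} L(y)/L(x) < ∞`. -/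
def DZ4cond {Ω : Type*} [MeasurableSpace Ω] (P : Measure Ω) (X Y : Ω → ℝ)
    (α : ℝ) (L : ℝ → ℝ) : Prop :=
  (¬ Integrable (fun ω => X ω ^ α) P) ∧
  (rvTail P Y) =o[atTop] (fun x => rvTail P X x / mTrunc P X α x) ∧
  ∃ M : ℝ, ∀ᶠ x : ℝ in atTop, ∀ y ∈ Set.Icc (Real.sqrt x) x, L y / L x ≤ M

end

/-!
Put `g u = log L(eᵘ) = α u + log P[X > eᵘ]`. The second summand is antitone, so `g` is locally
integrable with bounded increments on unit intervals, and slow variation says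
`g (u + s) - g u → 0`. Dominated convergence then gives Karamata's representation
`g u = a + o(1) + ∫₀ᵘ ε` with `ε u = g (u + 1) - g u → 0`. Splitting `ε = |ε| - (|ε| - ε)` into
two nonnegative hazard rates tending to `0` writes `exp ∫₀^{log x} ε` as a ratio of two long-tailed
tails evaluated at `log x`, which is form (iv).
-/

open Real

lemma isTailFun_of_antitone {T : ℝ → ℝ} (hT : Antitone T)
    (hcont : ∀ x, ContinuousWithinAt T (Ici x) x) (hbot : Tendsto T atBot (𝓝 1))
    (htop : Tendsto T atTop (𝓝 0)) : IsTailFun T := by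
  let F : StieltjesFunction ℝ :=
    { toFun := fun x => 1 - T x
      mono' := fun _ _ hab => sub_le_sub_left (hT hab) 1
      right_continuous' := fun x => continuousWithinAt_const.sub (hcont x) }
  have hFbot : Tendsto F atBot (𝓝 0) := by simpa using hbot.const_sub (1 : ℝ)
  have hFtop : Tendsto F atTop (𝓝 1) := by simpa using htop.const_sub (1 : ℝ)
  refine ⟨F.measure, F.isProbabilityMeasure hFbot hFtop, fun x => ?_⟩
  rw [F.measure_Ioi hFtop]
  simp [F, hT.le_of_tendsto htop x]

section HazardTail

variable {q : ℝ → ℝ}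

lemma tendsto_integral_add_of_tendsto_zero (hq : ∀ a b, IntervalIntegrable q volume a b)
    (hq0 : Tendsto q atTop (𝓝 0)) (y : ℝ) :
    Tendsto (fun u => ∫ s in u..u + y, q s) atTop (𝓝 0) := by
  obtain ⟨N, hN⟩ := eventually_atTop.1 (hq0.eventually (Metric.closedBall_mem_nhds 0 one_pos))
  have := intervalIntegral.tendsto_integral_filter_of_dominated_convergence (a := 0) (b := y)
    (μ := volume) (l := atTop) (F := fun u s => q (u + s)) (f := fun _ => 0) (fun _ => 1) ?_ ?_
    intervalIntegrable_const ?_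
  · simpa using this
  · filter_upwards with u
    simpa using ((hq u (u + y)).comp_add_left u).aestronglyMeasurable_restrict_uIoc
  · filter_upwards [eventually_ge_atTop (N + |y|)] with u hu
    refine ae_of_all _ fun s hs => ?_
    have hs' : -|y| ≤ s := (le_min (by simp) (neg_abs_le y)).trans hs.1.le
    simpa using hN (u + s) (by linarith)
  · exact ae_of_all _ fun s _ => hq0.comp (tendsto_atTop_add_const_right _ s tendsto_id)

/-- The tail of the law on `[0, ∞)` with hazard rate `q u + 1 / (1 + u)`; the second summand
makes the tail vanish at infinity even when `q` is integrable. -/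
noncomputable def hazardTail (q : ℝ → ℝ) (u : ℝ) : ℝ :=
  exp (-∫ s in (0 : ℝ)..max u 0, q s) / (1 + max u 0)

lemma hazardTail_of_nonneg {u : ℝ} (hu : 0 ≤ u) :
    hazardTail q u = exp (-∫ s in (0 : ℝ)..u, q s) / (1 + u) := by
  simp [hazardTail, max_eq_left hu]

lemma hazardTail_of_nonpos {u : ℝ} (hu : u ≤ 0) : hazardTail q u = 1 := by
  simp [hazardTail, max_eq_right hu]

lemma hazardTail_pos (u : ℝ) : 0 < hazardTail q u := by
  unfold hazardTail
  positivity

lemma hazardTail_antitone (hq0 : ∀ s, 0 ≤ q s) (hq : ∀ a b, IntervalIntegrable q volume a b) :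
    Antitone (hazardTail q) := by
  intro u v huv
  have hmax : max u 0 ≤ max v 0 := max_le_max_right 0 huv
  have hint : ∫ s in (0 : ℝ)..max u 0, q s ≤ ∫ s in (0 : ℝ)..max v 0, q s :=
    intervalIntegral.integral_mono_interval le_rfl (le_max_right u 0) hmax
      (ae_of_all _ hq0) (hq _ _)
  exact div_le_div₀ (exp_pos _).le (exp_le_exp.2 (neg_le_neg hint)) (by positivity)
    (by linarith)

lemma hazardTail_continuous (hq : ∀ a b, IntervalIntegrable q volume a b) :
    Continuous (hazardTail q) := by
  have hmax : Continuous fun u : ℝ => max u 0 := continuous_id.max continuous_const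
  exact ((intervalIntegral.continuous_primitive hq 0).comp hmax).neg.rexp.div
    (continuous_const.add hmax) fun u => by positivity

lemma hazardTail_tendsto_atTop (hq0 : ∀ s, 0 ≤ q s) :
    Tendsto (hazardTail q) atTop (𝓝 0) := by
  have hinv : Tendsto (fun u : ℝ => (1 + u)⁻¹) atTop (𝓝 0) :=
    tendsto_inv_atTop_zero.comp (tendsto_atTop_add_const_left _ 1 tendsto_id)
  refine tendsto_of_tendsto_of_tendsto_of_le_of_le' tendsto_const_nhds hinv
    (Eventually.of_forall fun u => (hazardTail_pos u).le) ?_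
  filter_upwards [eventually_ge_atTop 0] with u hu
  rw [hazardTail_of_nonneg hu, div_eq_mul_inv]
  have : 0 ≤ ∫ s in (0 : ℝ)..u, q s := intervalIntegral.integral_nonneg hu fun s _ => hq0 s
  exact mul_le_of_le_one_left (by positivity) (exp_le_one_iff.2 (by linarith))

lemma hazardTail_add_div {u y : ℝ} (hu : 0 ≤ u) (huy : 0 ≤ u + y)
    (hq : ∀ a b, IntervalIntegrable q volume a b) :
    hazardTail q (u + y) / hazardTail q u =
      exp (-∫ s in u..u + y, q s) * ((1 + u) / (1 + u + y)) := by
  rw [hazardTail_of_nonneg hu, hazardTail_of_nonneg huy,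
    ← intervalIntegral.integral_add_adjacent_intervals (hq 0 u) (hq u (u + y)), neg_add,
    exp_add]
  have hden : (1 : ℝ) + u + y ≠ 0 := by linarith
  field_simp
  ring

lemma hazardTail_tendsto_add_div (hq : ∀ a b, IntervalIntegrable q volume a b)
    (hq0 : Tendsto q atTop (𝓝 0)) (y : ℝ) :
    Tendsto (fun u => hazardTail q (u + y) / hazardTail q u) atTop (𝓝 1) := by
  have hexp : Tendsto (fun u => exp (-∫ s in u..u + y, q s)) atTop (𝓝 1) := by
    simpa using ((tendsto_integral_add_of_tendsto_zero hq hq0 y).neg).rexp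
  have hlin : Tendsto (fun u : ℝ => 1 - y * (1 * u + (1 + y))⁻¹) atTop (𝓝 1) := by
    simpa using
      ((tendsto_mul_add_inv_atTop_nhds_zero 1 (1 + y) one_ne_zero).const_mul y).const_sub 1
  have hprod := hexp.mul hlin
  rw [mul_one] at hprod
  refine hprod.congr' ?_
  filter_upwards [eventually_ge_atTop (|y|)] with u hu
  have hu0 : 0 ≤ u := (abs_nonneg y).trans hu
  have huy : 0 ≤ u + y := by linarith [neg_abs_le y]
  rw [hazardTail_add_div hu0 huy hq]
  have hden : (1 : ℝ) + u + y ≠ 0 := by linarith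
  rw [show 1 * u + (1 + y) = 1 + u + y by ring]
  congr 1
  field_simp
  ring

lemma longTailedFun_hazardTail (hq0 : ∀ s, 0 ≤ q s) (hq : ∀ a b, IntervalIntegrable q volume a b)
    (hqlim : Tendsto q atTop (𝓝 0)) : LongTailedFun (hazardTail q) := by
  refine ⟨isTailFun_of_antitone (hazardTail_antitone hq0 hq)
    (fun x => (hazardTail_continuous hq).continuousWithinAt) ?_ (hazardTail_tendsto_atTop hq0),
    hazardTail_tendsto_add_div hq hqlim⟩
  exact tendsto_const_nhds.congr' <| (eventually_le_atBot 0).mono fun u hu =>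
    (hazardTail_of_nonpos hu).symm

end HazardTail

section Representation

variable {g : ℝ → ℝ}

lemma intervalIntegrable_sub_comp_add_one (hg : ∀ a b, IntervalIntegrable g volume a b)
    (a b : ℝ) : IntervalIntegrable (fun u => g (u + 1) - g u) volume a b := by
  have := (hg (a + 1) (b + 1)).comp_add_right 1
  simp only [add_sub_cancel_right] at this
  exact this.sub (hg a b)

lemma integral_sub_comp_add_one (hg : ∀ a b, IntervalIntegrable g volume a b) (u : ℝ) :
    ∫ s in (0 : ℝ)..u, (g (s + 1) - g s) = (∫ s in u..u + 1, g s) - ∫ s in (0 : ℝ)..1, g s := by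
  rw [intervalIntegral.integral_sub (by simpa using (hg 1 (u + 1)).comp_add_right 1) (hg 0 u),
    intervalIntegral.integral_comp_add_right, zero_add]
  have h1 := intervalIntegral.integral_add_adjacent_intervals (hg 0 1) (hg 1 (u + 1))
  have h2 := intervalIntegral.integral_add_adjacent_intervals (hg 0 u) (hg u (u + 1))
  linarith

lemma tendsto_sub_integral_sub_comp_add_one {C : ℝ}
    (hg : ∀ a b, IntervalIntegrable g volume a b)
    (hlim : ∀ s > 0, Tendsto (fun u => g (u + s) - g u) atTop (𝓝 0))
    (hbdd : ∀ᶠ u in atTop, ∀ s ∈ Ioc (0 : ℝ) 1, |g (u + s) - g u| ≤ C) :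
    Tendsto (fun u => g u - ∫ s in (0 : ℝ)..u, (g (s + 1) - g s)) atTop
      (𝓝 (∫ s in (0 : ℝ)..1, g s)) := by
  have hshift (u : ℝ) : IntervalIntegrable (fun s => g (u + s)) volume 0 1 := by
    simpa using (hg u (u + 1)).comp_add_left u
  have hdct : Tendsto (fun u => ∫ s in (0 : ℝ)..1, (g (u + s) - g u)) atTop (𝓝 0) := by
    have := intervalIntegral.tendsto_integral_filter_of_dominated_convergence (a := 0) (b := 1)
      (μ := volume) (l := atTop) (F := fun u s => g (u + s) - g u) (f := fun _ => 0) (fun _ => C)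
      (Eventually.of_forall fun u => ?_) ?_ intervalIntegrable_const ?_
    · simpa using this
    · exact ((hshift u).sub intervalIntegrable_const).aestronglyMeasurable_restrict_uIoc
    · filter_upwards [hbdd] with u hu
      refine ae_of_all _ fun s hs => ?_
      rw [uIoc_of_le zero_le_one] at hs
      exact hu s hs
    · refine ae_of_all _ fun s hs => hlim s ?_
      rw [uIoc_of_le zero_le_one] at hs
      exact hs.1
  have hlim' := hdct.const_sub (∫ s in (0 : ℝ)..1, g s)
  rw [sub_zero] at hlim'
  refine hlim'.congr fun u => ?_
  rw [integral_sub_comp_add_one hg, intervalIntegral.integral_sub (hshift u)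
    intervalIntegrable_const, intervalIntegral.integral_comp_add_left]
  simp only [add_zero, intervalIntegral.integral_const, sub_zero, smul_eq_mul, one_mul]
  ring

lemma eventually_abs_sub_le_of_antitone {α : ℝ} {m : ℝ → ℝ} (hm : Antitone m)
    (h1 : Tendsto (fun u => α * (u + 1) + m (u + 1) - (α * u + m u)) atTop (𝓝 0)) :
    ∀ᶠ u in atTop, ∀ s ∈ Ioc (0 : ℝ) 1,
      |α * (u + s) + m (u + s) - (α * u + m u)| ≤ |α| + 1 := by
  filter_upwards [h1.eventually (Metric.closedBall_mem_nhds 0 one_pos)] with u hu s hs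
  rw [Real.dist_eq, sub_zero, abs_le] at hu
  have hus : m (u + s) ≤ m u := hm (by linarith [hs.1])
  have hus1 : m (u + 1) ≤ m (u + s) := hm (by linarith [hs.2])
  have hαs : |α * s| ≤ |α| := by
    rw [abs_mul, abs_of_pos hs.1]
    exact mul_le_of_le_one_right (abs_nonneg α) hs.2
  have hα1s : |α * (1 - s)| ≤ |α| := by
    rw [abs_mul, abs_of_nonneg (by linarith [hs.2] : (0 : ℝ) ≤ 1 - s)]
    exact mul_le_of_le_one_right (abs_nonneg α) (by linarith [hs.1])
  rw [abs_le] at hαs hα1s ⊢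
  constructor <;> linarith

end Representation

lemma typeFour_of_tendsto_sub_integral {L g ε : ℝ → ℝ} {a : ℝ} (hL : ∀ x > 0, 0 < L x)
    (hgL : ∀ u, log (L (exp u)) = g u) (hε : ∀ a b, IntervalIntegrable ε volume a b)
    (hε0 : Tendsto ε atTop (𝓝 0))
    (hlim : Tendsto (fun u => g u - ∫ s in (0 : ℝ)..u, ε s) atTop (𝓝 a)) :
    TypeFour L (hazardTail fun s => |ε s| - ε s) := by
  have hVi (a b : ℝ) : IntervalIntegrable (fun s => |ε s|) volume a b := (hε a b).abs
  have hUi (a b : ℝ) : IntervalIntegrable (fun s => |ε s| - ε s) volume a b :=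
    (hVi a b).sub (hε a b)
  have hV0 : Tendsto (fun s => |ε s|) atTop (𝓝 0) := by simpa using hε0.abs
  have hU0 : Tendsto (fun s => |ε s| - ε s) atTop (𝓝 0) := by simpa using hV0.sub hε0
  have hratio {u : ℝ} (hu : 0 ≤ u) : hazardTail (fun s => |ε s|) u /
      hazardTail (fun s => |ε s| - ε s) u = exp (-∫ s in (0 : ℝ)..u, ε s) := by
    rw [hazardTail_of_nonneg hu, hazardTail_of_nonneg hu,
      intervalIntegral.integral_sub (hVi 0 u) (hε 0 u), div_div_div_cancel_right₀ (by linarith),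
      ← exp_sub]
    ring_nf
  refine ⟨fun x => L x * (hazardTail (fun s => |ε s|) (log x) /
      hazardTail (fun s => |ε s| - ε s) (log x)), exp a, _, exp_pos a, ?_,
    longTailedFun_hazardTail (fun s => by linarith [le_abs_self (ε s)]) hUi hU0,
    longTailedFun_hazardTail (fun s => abs_nonneg (ε s)) hVi hV0, fun x hx => ?_⟩
  · refine ((hlim.comp tendsto_log_atTop).rexp).congr' ?_
    filter_upwards [eventually_ge_atTop 1] with x hx
    rw [Function.comp_apply, ← hgL, exp_log (by linarith), sub_eq_add_neg, exp_add,
      exp_log (hL x (by linarith)), hratio (log_nonneg hx)]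
  · have := hazardTail_pos (q := fun s => |ε s|) (log x)
    have := hazardTail_pos (q := fun s => |ε s| - ε s) (log x)
    field_simp

lemma SlowlyVarying.eventually_ne_zero {L : ℝ → ℝ} (h : SlowlyVarying L) :
    ∀ᶠ x in atTop, L x ≠ 0 := by
  filter_upwards [(h 1 one_pos).eventually_ne one_ne_zero] with x hx h0
  simp [h0] at hx

lemma SlowlyVarying.tendsto_log_comp_exp_add_sub {L : ℝ → ℝ} (h : SlowlyVarying L)
    (hL : ∀ x > 0, 0 < L x) (s : ℝ) :
    Tendsto (fun u => log (L (exp (u + s))) - log (L (exp u))) atTop (𝓝 0) := by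
  have := (continuousAt_log one_ne_zero).tendsto.comp
    ((h (exp s) (exp_pos s)).comp tendsto_exp_atTop)
  rw [log_one] at this
  refine this.congr fun u => ?_
  simp only [Function.comp_apply, exp_add]
  rw [log_div (hL _ (by positivity)).ne' (hL _ (exp_pos u)).ne']

section Tail

variable {Ω : Type*} [MeasurableSpace Ω] {P : Measure Ω} [IsFiniteMeasure P] {X : Ω → ℝ}

lemma rvTail_antitone : Antitone (rvTail P X) := fun _ _ hab =>
  ENNReal.toReal_mono (measure_ne_top P _) (measure_mono fun _ hω => lt_of_le_of_lt hab hω)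

lemma rvTail_pos_of_slowlyVarying {α : ℝ} {L : ℝ → ℝ}
    (hL : ∀ x > 0, rvTail P X x = x ^ (-α) * L x) (hsv : SlowlyVarying L) (x : ℝ) :
    0 < rvTail P X x := by
  obtain ⟨y, ⟨hy0, hLy⟩, hxy⟩ :=
    (((eventually_gt_atTop 0).and hsv.eventually_ne_zero).and (eventually_ge_atTop x)).exists
  have hTy : rvTail P X y ≠ 0 := by
    rw [hL y hy0]
    exact mul_ne_zero (rpow_pos_of_pos hy0 _).ne' hLy
  exact (ENNReal.toReal_nonneg.lt_of_ne' hTy).trans_le (rvTail_antitone hxy)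

end Tail

theorem slowly_varying_four_types_general {Ω : Type*} [MeasurableSpace Ω]
    (P : Measure Ω) [IsProbabilityMeasure P] (X : Ω → ℝ) (α : ℝ) (L : ℝ → ℝ)
    (hL : ∀ x > 0, rvTail P X x = x ^ (-α) * L x) (hsv : SlowlyVarying L) :
    (∃ (c : ℝ → ℝ) (c₀ : ℝ), 0 < c₀ ∧ Tendsto c atTop (𝓝 c₀) ∧
      ∀ x ≥ 1, L x = c x) ∨
    (∃ (c : ℝ → ℝ) (c₀ : ℝ) (TV : ℝ → ℝ), 0 < c₀ ∧ Tendsto c atTop (𝓝 c₀) ∧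
      LongTailedFun TV ∧ ∀ x ≥ 1, L x = c x / TV (Real.log x)) ∨
    (∃ TU, TypeThree L TU) ∨
    (∃ TU, TypeFour L TU) := by
  have hT := rvTail_pos_of_slowlyVarying hL hsv
  have hLpos : ∀ x > 0, 0 < L x := fun x hx =>
    pos_of_mul_pos_right (hL x hx ▸ hT x) (rpow_pos_of_pos hx _).le
  have hm : Antitone fun u => log (rvTail P X (exp u)) :=
    fun _ _ hab => log_le_log (hT _) (rvTail_antitone (exp_le_exp.2 hab))
  set g : ℝ → ℝ := fun u => α * u + log (rvTail P X (exp u))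
  have hgL (u : ℝ) : log (L (exp u)) = g u := by
    simp only [g]
    rw [hL _ (exp_pos u), log_mul (rpow_pos_of_pos (exp_pos u) _).ne' (hLpos _ (exp_pos u)).ne',
      log_rpow (exp_pos u), log_exp]
    ring
  have hgi (a b : ℝ) : IntervalIntegrable g volume a b :=
    ((continuous_const.mul continuous_id).intervalIntegrable a b).add hm.intervalIntegrable
  have hinc (s : ℝ) : Tendsto (fun u => g (u + s) - g u) atTop (𝓝 0) := by
    simpa only [hgL] using hsv.tendsto_log_comp_exp_add_sub hLpos s
  exact Or.inr <| Or.inr <| Or.inr ⟨_, typeFour_of_tendsto_sub_integral hLpos hgL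
    (intervalIntegrable_sub_comp_add_one hgi) (hinc 1) (tendsto_sub_integral_sub_comp_add_one hgi
      (fun s _ => hinc s) (eventually_abs_sub_le_of_antitone hm (hinc 1)))⟩

/-- Characterization of the slowly varying part of a regularly varying tail:
`L` is of one of the four forms (i)-(iv). -/
theorem slowly_varying_four_types {Ω : Type*} [MeasurableSpace Ω]
    (P : Measure Ω) [IsProbabilityMeasure P] (X : Ω → ℝ) (α : ℝ) (L : ℝ → ℝ)
    (hα : 0 < α) (hX0 : ∀ ω, 0 ≤ X ω) (hRV : RegVar P X α)
    (hL : ∀ x > 0, rvTail P X x = x ^ (-α) * L x) (hsv : SlowlyVarying L) :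
    (∃ (c : ℝ → ℝ) (c₀ : ℝ), 0 < c₀ ∧ Tendsto c atTop (𝓝 c₀) ∧
      ∀ x ≥ 1, L x = c x) ∨
    (∃ (c : ℝ → ℝ) (c₀ : ℝ) (TV : ℝ → ℝ), 0 < c₀ ∧ Tendsto c atTop (𝓝 c₀) ∧
      LongTailedFun TV ∧ ∀ x ≥ 1, L x = c x / TV (Real.log x)) ∨
    (∃ TU, TypeThree L TU) ∨
    (∃ TU, TypeFour L TU) :=
  slowly_varying_four_types_general P X α L hL hsv
end

section
/- Let X ≥ 0 have distribution F with F̄ ∈ RV_{−α} (α > 0), F̄(x) = x^{−α} L(x), E[X^α] = ∞, and m(x) = ∫_0^x v^α F(dv). Suppose the pair (F, G) satisfies (DZ4): Ḡ(x) = o(F̄(x)/m(x)) and limsup_{x→∞} sup_{√x ≤ y ≤ x} L(y)/L(x) < ∞. Let H_i be a distribution on [0,∞) whose tail satisfies H̄_i(x) ~ c F̄(x) for some constant c ∈ (0,∞), and write H̄_i(x) = x^{−α} L_i(x), m_i(x) = ∫_0^x t^α H_i(dt). Then (H_i, G) also satisfies (DZ4): limsup_{x→∞} sup_{√x ≤ y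 ≤ x} L_i(y)/L_i(x) < ∞, limsup_{x→∞} m_i(x)/m(x) ≤ sup_{x > 0} H̄_i(x)/F̄(x) < ∞, and Ḡ(x) = o(H̄_i(x)/m_i(x)) as x → ∞. -/
/-!
Since `H̄ ~ c F̄` and `F̄ > 0` eventually, `c/2 F̄ ≤ H̄ ≤ 2c F̄` for large `x`, and then
`H̄ ≤ S F̄` everywhere. The two-sided bound gives `L_i ≍ L`, which carries the window
condition over to `L_i`. For the truncated moments, `E[(X ∧ x)^α] = m(x) + x^α F̄(x)`, and the
layer-cake formula turns `H̄ ≤ S F̄` into `m_i(x) ≤ S (m(x) + x^α F̄(x))`. Regular variation gives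
`F̄(x/2) ~ 2^α F̄(x)`, so the mass of `(x/2, x]` shows `x^α F̄(x) = O(m(x))`. Hence
`m_i = O(m)` and `Ḡ m_i / H̄ = O(Ḡ m / F̄) → 0`.
-/

open MeasureTheory ProbabilityTheory Filter Set
open scoped ENNReal Topology

section TruncatedMoments

variable {μ ν : Measure ℝ} {α x : ℝ}

lemma min_max_nonneg (a : ℝ) (hx : 0 ≤ x) : 0 ≤ min (max a 0) x :=
  le_min (le_max_right a 0) hx

lemma continuous_min_max_rpow (hα : 0 ≤ α) : Continuous fun a : ℝ => min (max a 0) x ^ α :=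
  ((continuous_id.max continuous_const).min continuous_const).rpow_const fun _ => Or.inr hα

lemma min_max_rpow_le (a : ℝ) (hα : 0 ≤ α) (hx : 0 ≤ x) : min (max a 0) x ^ α ≤ x ^ α :=
  Real.rpow_le_rpow (min_max_nonneg a hx) (min_le_right _ _) hα

lemma integrable_min_max_rpow [IsFiniteMeasure μ] (hα : 0 ≤ α) (hx : 0 ≤ x) :
    Integrable (fun a => min (max a 0) x ^ α) μ := by
  refine (integrable_const (x ^ α)).mono' (continuous_min_max_rpow hα).aestronglyMeasurable ?_
  filter_upwards with a
  rw [Real.norm_eq_abs, abs_of_nonneg (Real.rpow_nonneg (min_max_nonneg a hx) α)]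
  exact min_max_rpow_le a hα hx

lemma integral_min_max_rpow [IsFiniteMeasure μ] (hμ : μ (Iio 0) = 0) (hα : 0 ≤ α)
    (hx : 0 ≤ x) :
    ∫ a, min (max a 0) x ^ α ∂μ = (∫ t in Icc 0 x, t ^ α ∂μ) + x ^ α * μ.real (Ioi x) := by
  have hint := integrable_min_max_rpow (μ := μ) hα hx
  have hμ_Ici : μ.restrict (Ici 0) = μ :=
    Measure.restrict_eq_self_of_ae_mem (by simpa [ae_iff, Iio, not_le] using hμ)
  have hIcc : ∫ a in Icc 0 x, min (max a 0) x ^ α ∂μ = ∫ t in Icc 0 x, t ^ α ∂μ :=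
    setIntegral_congr_fun measurableSet_Icc fun a ha => by
      simp only [max_eq_left ha.1, min_eq_left ha.2]
  have hIoi : ∫ a in Ioi x, min (max a 0) x ^ α ∂μ = ∫ _ in Ioi x, x ^ α ∂μ :=
    setIntegral_congr_fun measurableSet_Ioi fun a (ha : x < a) => by
      simp only [max_eq_left (hx.trans ha.le), min_eq_right ha.le]
  calc ∫ a, min (max a 0) x ^ α ∂μ = ∫ a in Icc 0 x ∪ Ioi x, min (max a 0) x ^ α ∂μ := by
        rw [Icc_union_Ioi_eq_Ici hx, hμ_Ici]
    _ = (∫ t in Icc 0 x, t ^ α ∂μ) + x ^ α * μ.real (Ioi x) := by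
        rw [setIntegral_union ((Iic_disjoint_Ioi le_rfl).mono_left Icc_subset_Iic_self)
          measurableSet_Ioi hint.integrableOn hint.integrableOn, hIcc, hIoi, setIntegral_const,
          smul_eq_mul, mul_comm]

lemma setOf_lt_min_max_rpow (hα : 0 < α) (hx : 0 ≤ x) {t : ℝ} (ht : 0 < t) (htx : t < x ^ α) :
    {a : ℝ | t < min (max a 0) x ^ α} = Ioi (t ^ α⁻¹) := by
  have hroot_pos : 0 < t ^ α⁻¹ := Real.rpow_pos_of_pos ht _
  have hroot_lt : t ^ α⁻¹ < x := (Real.rpow_inv_lt_iff_of_pos ht.le hx hα).2 htx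
  ext a
  rw [mem_ofPred_eq, mem_Ioi, ← Real.rpow_inv_lt_iff_of_pos ht.le (min_max_nonneg a hx) hα]
  simp only [lt_min_iff, lt_max_iff, hroot_lt, and_true, hroot_pos.not_gt, or_false]

lemma setOf_lt_min_max_rpow_eq_empty (hα : 0 ≤ α) (hx : 0 ≤ x) {t : ℝ} (htx : x ^ α ≤ t) :
    {a : ℝ | t < min (max a 0) x ^ α} = ∅ :=
  eq_empty_of_forall_notMem fun a ha => (ha.trans_le (min_max_rpow_le a hα hx)).not_ge htx

/-- The superlevel sets of `a ↦ (a⁺ ∧ x)^α` at positive levels are half-lines `(s, ∞)`, so the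
layer-cake formula compares the two integrals level by level. -/
lemma lintegral_min_max_rpow_le_of_measure_Ioi_le {C : ℝ≥0∞}
    (h : ∀ s > 0, μ (Ioi s) ≤ C * ν (Ioi s)) (hα : 0 < α) (hx : 0 ≤ x) :
    ∫⁻ a, ENNReal.ofReal (min (max a 0) x ^ α) ∂μ
      ≤ C * ∫⁻ a, ENNReal.ofReal (min (max a 0) x ^ α) ∂ν := by
  have hnn : ∀ κ : Measure ℝ, 0 ≤ᵐ[κ] fun a : ℝ => min (max a 0) x ^ α := fun κ =>
    ae_of_all _ fun a => Real.rpow_nonneg (min_max_nonneg a hx) α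
  have hmeas := (continuous_min_max_rpow (x := x) hα.le).measurable
  have htail_meas : Measurable fun t : ℝ => ν {a | t < min (max a 0) x ^ α} :=
    Antitone.measurable fun _ _ hst => measure_mono fun _ ha => hst.trans_lt ha
  rw [lintegral_eq_lintegral_meas_lt μ (hnn μ) hmeas.aemeasurable,
    lintegral_eq_lintegral_meas_lt ν (hnn ν) hmeas.aemeasurable,
    ← lintegral_const_mul _ htail_meas]
  refine setLIntegral_mono' measurableSet_Ioi fun t (ht : 0 < t) => ?_
  rcases lt_or_ge t (x ^ α) with htx | htx
  · simp only [setOf_lt_min_max_rpow hα hx ht htx]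
    exact h _ (Real.rpow_pos_of_pos ht _)
  · simp [setOf_lt_min_max_rpow_eq_empty hα.le hx htx]

lemma setIntegral_rpow_Icc_le_of_measureReal_Ioi_le [IsFiniteMeasure μ] [IsFiniteMeasure ν]
    (hμ : μ (Iio 0) = 0) (hν : ν (Iio 0) = 0) {S : ℝ} (hS : 0 ≤ S)
    (h : ∀ s > 0, μ.real (Ioi s) ≤ S * ν.real (Ioi s)) (hα : 0 < α) (hx : 0 ≤ x) :
    ∫ t in Icc 0 x, t ^ α ∂μ ≤ S * ((∫ t in Icc 0 x, t ^ α ∂ν) + x ^ α * ν.real (Ioi x)) := by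
  have h_ennreal : ∀ s > 0, μ (Ioi s) ≤ ENNReal.ofReal S * ν (Ioi s) := fun s hs => by
    rw [← ofReal_measureReal, ← ofReal_measureReal, ← ENNReal.ofReal_mul hS]
    exact ENNReal.ofReal_le_ofReal (h s hs)
  have hnn : ∀ κ : Measure ℝ, 0 ≤ᵐ[κ] fun a : ℝ => min (max a 0) x ^ α := fun κ =>
    ae_of_all _ fun a => Real.rpow_nonneg (min_max_nonneg a hx) α
  have hint : ∀ κ : Measure ℝ, [IsFiniteMeasure κ] →
      Integrable (fun a => min (max a 0) x ^ α) κ := fun κ _ =>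
    integrable_min_max_rpow hα.le hx
  have hcomp : ∫ a, min (max a 0) x ^ α ∂μ ≤ S * ∫ a, min (max a 0) x ^ α ∂ν := by
    rw [integral_eq_lintegral_of_nonneg_ae (hnn μ) (hint μ).aestronglyMeasurable,
      integral_eq_lintegral_of_nonneg_ae (hnn ν) (hint ν).aestronglyMeasurable,
      ← ENNReal.toReal_ofReal hS, ← ENNReal.toReal_mul]
    exact ENNReal.toReal_mono (ENNReal.mul_ne_top ENNReal.ofReal_ne_top
      (hint ν).lintegral_lt_top.ne) (lintegral_min_max_rpow_le_of_measure_Ioi_le h_ennreal hα hx)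
  rw [integral_min_max_rpow hμ hα.le hx, integral_min_max_rpow hν hα.le hx] at hcomp
  linarith [mul_nonneg (Real.rpow_nonneg hx α) (measureReal_nonneg (μ := μ) (s := Ioi x))]

lemma rpow_mul_measureReal_Ioc_le_setIntegral [IsFiniteMeasure μ] (hα : 0 ≤ α) {a : ℝ}
    (ha : 0 ≤ a) : a ^ α * μ.real (Ioc a x) ≤ ∫ t in Icc 0 x, t ^ α ∂μ := by
  have hint : IntegrableOn (fun t : ℝ => t ^ α) (Icc 0 x) μ :=
    (continuous_id.rpow_const fun _ => Or.inr hα).integrableOn_Icc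
  have hsub : Ioc a x ⊆ Icc 0 x := fun t ht => ⟨ha.trans ht.1.le, ht.2⟩
  calc a ^ α * μ.real (Ioc a x) ≤ ∫ t in Ioc a x, t ^ α ∂μ := by
        rw [mul_comm, ← smul_eq_mul]
        exact setIntegral_ge_of_const_le measurableSet_Ioc (measure_ne_top _ _)
          (fun t ht => Real.rpow_le_rpow ha ht.1.le hα) (hint.mono_set hsub)
    _ ≤ ∫ t in Icc 0 x, t ^ α ∂μ :=
        setIntegral_mono_set hint
          (ae_restrict_of_forall_mem measurableSet_Icc fun t ht => Real.rpow_nonneg ht.1 α)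
          hsub.eventuallyLE

/-- The mass `μ(x/2, x] > (r - 1) μ(x, ∞)` sits where `t^α ≥ x^α / 2^α`. -/
lemma eventually_rpow_mul_measureReal_Ioi_le [IsFiniteMeasure μ] (hα : 0 ≤ α) {r : ℝ}
    (hr : 1 < r) (h : ∀ᶠ x in atTop, r < μ.real (Ioi (x * 2⁻¹)) / μ.real (Ioi x)) :
    ∀ᶠ x in atTop, 0 < μ.real (Ioi x) ∧ 0 < ∫ t in Icc 0 x, t ^ α ∂μ ∧
      x ^ α * μ.real (Ioi x) ≤ 2 ^ α / (r - 1) * ∫ t in Icc 0 x, t ^ α ∂μ := by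
  filter_upwards [h, eventually_gt_atTop 0] with x hratio hx
  have htail : 0 < μ.real (Ioi x) := measureReal_nonneg.lt_of_ne' fun h0 => by
    rw [h0, div_zero] at hratio
    linarith
  have hhalf : 0 ≤ x * 2⁻¹ := by positivity
  have hIoc : (r - 1) * μ.real (Ioi x) < μ.real (Ioc (x * 2⁻¹) x) := by
    rw [lt_div_iff₀ htail, ← Ioc_union_Ioi_eq_Ioi (by linarith : x * 2⁻¹ ≤ x),
      measureReal_union Ioc_disjoint_Ioi_same measurableSet_Ioi] at hratio
    linarith
  have hmoment := rpow_mul_measureReal_Ioc_le_setIntegral (μ := μ) (x := x) hα hhalf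
  have hpow : 0 < (x * 2⁻¹) ^ α := Real.rpow_pos_of_pos (by positivity) α
  have hr1 : r - 1 ≠ 0 := by linarith
  have hIoc_pos : 0 < μ.real (Ioc (x * 2⁻¹) x) := by nlinarith
  refine ⟨htail, (mul_pos hpow hIoc_pos).trans_le hmoment, ?_⟩
  calc x ^ α * μ.real (Ioi x)
        = 2 ^ α / (r - 1) * ((x * 2⁻¹) ^ α * ((r - 1) * μ.real (Ioi x))) := by
        rw [Real.mul_rpow hx.le (by norm_num), Real.inv_rpow (by norm_num)]
        field_simp
    _ ≤ 2 ^ α / (r - 1) * ((x * 2⁻¹) ^ α * μ.real (Ioc (x * 2⁻¹) x)) := by gcongr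
    _ ≤ 2 ^ α / (r - 1) * ∫ t in Icc 0 x, t ^ α ∂μ := by gcongr

lemma exists_eventually_rpow_mul_measureReal_Ioi_le [IsFiniteMeasure μ] (hα : 0 < α)
    (h : Tendsto (fun x => μ.real (Ioi (x * 2⁻¹)) / μ.real (Ioi x)) atTop (𝓝 (2 ^ α))) :
    ∃ C > 0, ∀ᶠ x in atTop, 0 < μ.real (Ioi x) ∧ 0 < ∫ t in Icc 0 x, t ^ α ∂μ ∧
      x ^ α * μ.real (Ioi x) ≤ C * ∫ t in Icc 0 x, t ^ α ∂μ := by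
  have h2α : 1 < (2:ℝ) ^ α := Real.one_lt_rpow one_lt_two hα
  have hr : 1 < (1 + (2:ℝ) ^ α) / 2 := by linarith
  exact ⟨_, div_pos (by positivity) (by linarith),
    eventually_rpow_mul_measureReal_Ioi_le hα.le hr (h.eventually_const_lt (by linarith))⟩

lemma eventually_setIntegral_rpow_Icc_le_mul [IsFiniteMeasure μ] [IsFiniteMeasure ν]
    (hμ : μ (Iio 0) = 0) (hν : ν (Iio 0) = 0) {S C : ℝ} (hS : 0 ≤ S)
    (h : ∀ s > 0, μ.real (Ioi s) ≤ S * ν.real (Ioi s)) (hα : 0 < α)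
    (hC : ∀ᶠ x in atTop, x ^ α * ν.real (Ioi x) ≤ C * ∫ t in Icc 0 x, t ^ α ∂ν) :
    ∀ᶠ x in atTop, ∫ t in Icc 0 x, t ^ α ∂μ ≤ S * (1 + C) * ∫ t in Icc 0 x, t ^ α ∂ν := by
  filter_upwards [hC, eventually_ge_atTop 0] with x hCx hx
  calc ∫ t in Icc 0 x, t ^ α ∂μ
      ≤ S * ((∫ t in Icc 0 x, t ^ α ∂ν) + x ^ α * ν.real (Ioi x)) :=
        setIntegral_rpow_Icc_le_of_measureReal_Ioi_le hμ hν hS h hα hx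
    _ ≤ S * ((∫ t in Icc 0 x, t ^ α ∂ν) + C * ∫ t in Icc 0 x, t ^ α ∂ν) := by gcongr
    _ = S * (1 + C) * ∫ t in Icc 0 x, t ^ α ∂ν := by ring

end TruncatedMoments

section TailComparison

variable {μ ν : Measure ℝ}

lemma eventually_half_mul_le_and_le_two_mul {l : Filter ℝ} {f g : ℝ → ℝ} {c : ℝ} (hc : 0 < c)
    (hg : ∀ᶠ x in l, 0 < g x) (h : Tendsto (fun x => f x / g x) l (𝓝 c)) :
    ∀ᶠ x in l, c / 2 * g x ≤ f x ∧ f x ≤ 2 * c * g x := by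
  filter_upwards [hg, h.eventually_const_lt (by linarith : c / 2 < c),
    h.eventually_lt_const (by linarith : c < 2 * c)] with x hgx hlo hhi
  rw [lt_div_iff₀ hgx] at hlo
  rw [div_lt_iff₀ hgx] at hhi
  exact ⟨hlo.le, hhi.le⟩

/-- Below the threshold `s₀`, `ν(s, ∞) ≥ ν(s₀, ∞) > 0` while `μ(s, ∞) ≤ μ(ℝ)`. -/
lemma exists_forall_measureReal_Ioi_le_mul [IsFiniteMeasure μ] [IsFiniteMeasure ν] {b : ℝ}
    (h : ∀ᶠ s in atTop, 0 < ν.real (Ioi s) ∧ μ.real (Ioi s) ≤ b * ν.real (Ioi s)) :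
    ∃ S, 0 ≤ S ∧ ∀ s, μ.real (Ioi s) ≤ S * ν.real (Ioi s) := by
  obtain ⟨s₀, hs₀⟩ := eventually_atTop.1 h
  obtain ⟨hν₀, -⟩ := hs₀ s₀ le_rfl
  refine ⟨max b (μ.real univ / ν.real (Ioi s₀)), by positivity, fun s => ?_⟩
  rcases le_total s₀ s with hs | hs
  · exact (hs₀ s hs).2.trans (by gcongr; exact le_max_left _ _)
  · calc μ.real (Ioi s) ≤ μ.real univ / ν.real (Ioi s₀) * ν.real (Ioi s₀) := by
          rw [div_mul_cancel₀ _ hν₀.ne']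
          exact measureReal_mono (subset_univ _)
      _ ≤ max b (μ.real univ / ν.real (Ioi s₀)) * ν.real (Ioi s) :=
          mul_le_mul (le_max_right _ _) (measureReal_mono (Ioi_subset_Ioi hs)) hν₀.le
            (by positivity)

end TailComparison

lemma eventually_pos_and_mul_le_and_le_mul_of_eq_rpow_neg_mul {f g L Li : ℝ → ℝ} {α a b : ℝ}
    (hf : ∀ x > 0, f x = x ^ (-α) * L x) (hg : ∀ x > 0, g x = x ^ (-α) * Li x)
    (h : ∀ᶠ x in atTop, 0 < f x ∧ a * f x ≤ g x ∧ g x ≤ b * f x) :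
    ∀ᶠ x in atTop, 0 < L x ∧ a * L x ≤ Li x ∧ Li x ≤ b * L x := by
  filter_upwards [h, eventually_gt_atTop 0] with x ⟨hpos, hlo, hhi⟩ hx
  have hpow : 0 < x ^ (-α) := Real.rpow_pos_of_pos hx _
  rw [hf x hx] at hpos hlo hhi
  rw [hg x hx] at hlo hhi
  exact ⟨pos_of_mul_pos_right hpos hpow.le, by nlinarith, by nlinarith⟩

/-- The regularity condition of (DZ4) on the slowly varying part `L`. -/
def SqrtRatioBounded (L : ℝ → ℝ) : Prop :=
  ∃ M : ℝ, ∀ᶠ x : ℝ in atTop, ∀ y ∈ Icc (Real.sqrt x) x, L y / L x ≤ M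

lemma eventually_forall_mem_Icc_sqrt {p : ℝ → Prop} (h : ∀ᶠ y in atTop, p y) :
    ∀ᶠ x in atTop, ∀ y ∈ Icc (Real.sqrt x) x, p y :=
  (Real.tendsto_sqrt_atTop.eventually (eventually_forall_ge_atTop.2 h)).mono
    fun _ hx y hy => hx y hy.1

lemma SqrtRatioBounded.of_eventually_bounds {L Li : ℝ → ℝ} (hL : SqrtRatioBounded L)
    {a b : ℝ} (ha : 0 < a) (hb : 0 ≤ b)
    (h : ∀ᶠ x in atTop, 0 < L x ∧ a * L x ≤ Li x ∧ Li x ≤ b * L x) : SqrtRatioBounded Li := by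
  obtain ⟨M, hM⟩ := hL
  refine ⟨b / a * M, ?_⟩
  filter_upwards [hM, h, eventually_forall_mem_Icc_sqrt h]
    with x hMx ⟨hLx, hax, _⟩ hwindow y hy
  obtain ⟨hLy, -, hby⟩ := hwindow y hy
  calc Li y / Li x ≤ b * L y / (a * L x) :=
        div_le_div₀ (by positivity) hby (by positivity) hax
    _ = b / a * (L y / L x) := by field_simp
    _ ≤ b / a * M := by gcongr; exact hMx y hy

lemma tendsto_mul_div_nhds_zero_of_isLittleO {l : Filter ℝ} {g f h m mH : ℝ → ℝ} {a K : ℝ}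
    (ha : 0 < a) (hgo : g =o[l] fun x => f x / m x) (hg : ∀ᶠ x in l, 0 ≤ g x)
    (hf : ∀ᶠ x in l, 0 < f x ∧ a * f x ≤ h x) (hm : ∀ᶠ x in l, 0 < m x)
    (hmH : ∀ᶠ x in l, 0 ≤ mH x ∧ mH x ≤ K * m x) :
    Tendsto (fun x => g x * mH x / h x) l (𝓝 0) := by
  refine squeeze_zero' ?_ ?_ (by simpa using hgo.tendsto_div_nhds_zero.const_mul (K / a))
  · filter_upwards [hg, hf, hmH] with x hgx ⟨hfx, hhx⟩ ⟨hmHx, _⟩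
    exact div_nonneg (mul_nonneg hgx hmHx) (by nlinarith)
  · filter_upwards [hg, hf, hm, hmH] with x hgx ⟨hfx, hhx⟩ hmx ⟨hmHx, hmHle⟩
    calc g x * mH x / h x ≤ g x * (K * m x) / (a * f x) :=
          div_le_div₀ (by nlinarith) (by gcongr) (by positivity) hhx
      _ = K / a * (g x / (f x / m x)) := by field_simp

theorem DZ4_inherited_general (α c : ℝ) (hα : 0 < α) (hc : 0 < c)
    (μF μG μH : Measure ℝ)
    [IsProbabilityMeasure μF] [IsProbabilityMeasure μH]
    (hF0 : μF (Set.Iio 0) = 0) (hH0 : μH (Set.Iio 0) = 0)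
    (L Li : ℝ → ℝ)
    (hRV : ∀ y : ℝ, 0 < y → Tendsto
      (fun x => (μF (Set.Ioi (x * y))).toReal / (μF (Set.Ioi x)).toReal)
      atTop (𝓝 (y ^ (-α))))
    (hL : ∀ x > 0, (μF (Set.Ioi x)).toReal = x ^ (-α) * L x)
    (hLi : ∀ x > 0, (μH (Set.Ioi x)).toReal = x ^ (-α) * Li x)
    (hGo : (fun x => (μG (Set.Ioi x)).toReal) =o[atTop]
      (fun x => (μF (Set.Ioi x)).toReal / ∫ v in Set.Icc (0:ℝ) x, v ^ α ∂μF))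
    (hsup : ∃ M : ℝ, ∀ᶠ x : ℝ in atTop, ∀ y ∈ Set.Icc (Real.sqrt x) x, L y / L x ≤ M)
    (hHtail : Tendsto (fun x => (μH (Set.Ioi x)).toReal / (μF (Set.Ioi x)).toReal)
      atTop (𝓝 c)) :
    (∃ M : ℝ, ∀ᶠ x : ℝ in atTop, ∀ y ∈ Set.Icc (Real.sqrt x) x, Li y / Li x ≤ M) ∧
    (∃ S : ℝ, (∀ x > 0, (μH (Set.Ioi x)).toReal ≤ S * (μF (Set.Ioi x)).toReal) ∧
      Filter.limsup (fun x => (∫ t in Set.Icc (0:ℝ) x, t ^ α ∂μH) /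
        ∫ v in Set.Icc (0:ℝ) x, v ^ α ∂μF) atTop ≤ S) ∧
    Tendsto (fun x => (μG (Set.Ioi x)).toReal *
      (∫ t in Set.Icc (0:ℝ) x, t ^ α ∂μH) / (μH (Set.Ioi x)).toReal)
      atTop (𝓝 0) := by
  simp only [← measureReal_def] at *
  have hhalf : (2⁻¹ : ℝ) ^ (-α) = 2 ^ α := by
    rw [Real.inv_rpow zero_le_two, Real.rpow_neg zero_le_two, inv_inv]
  obtain ⟨C, hC, hF⟩ := exists_eventually_rpow_mul_measureReal_Ioi_le hα
    (hhalf ▸ hRV 2⁻¹ (by norm_num))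
  have hFH : ∀ᶠ x in atTop, 0 < μF.real (Ioi x) ∧
      c / 2 * μF.real (Ioi x) ≤ μH.real (Ioi x) ∧ μH.real (Ioi x) ≤ 2 * c * μF.real (Ioi x) :=
    (hF.mono fun _ h => h.1).and
      (eventually_half_mul_le_and_le_two_mul hc (hF.mono fun _ h => h.1) hHtail)
  obtain ⟨S, hS, hHF⟩ := exists_forall_measureReal_Ioi_le_mul
    (hFH.mono fun _ h => ⟨h.1, h.2.2⟩)
  have hmH := eventually_setIntegral_rpow_Icc_le_mul hH0 hF0 hS (fun s _ => hHF s) hα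
    (hF.mono fun _ h => h.2.2)
  have hmH_nonneg (x : ℝ) : 0 ≤ ∫ t in Icc 0 x, t ^ α ∂μH :=
    setIntegral_nonneg measurableSet_Icc fun t ht => Real.rpow_nonneg ht.1 α
  refine ⟨?_, ⟨S * (1 + C), fun x _ => ?_, ?_⟩, ?_⟩
  · exact SqrtRatioBounded.of_eventually_bounds hsup (half_pos hc) (by positivity)
      (eventually_pos_and_mul_le_and_le_mul_of_eq_rpow_neg_mul hL hLi hFH)
  · exact (hHF x).trans (by gcongr; exact le_mul_of_one_le_right hS (by linarith))
  · refine limsup_le_of_le (isCoboundedUnder_le_of_eventually_le atTop (x := 0) ?_) ?_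
    · filter_upwards [hF] with x hx using div_nonneg (hmH_nonneg x) hx.2.1.le
    · filter_upwards [hmH, hF] with x hx h'x using (div_le_iff₀ h'x.2.1).2 hx
  · exact tendsto_mul_div_nhds_zero_of_isLittleO (half_pos hc) hGo
      (Eventually.of_forall fun _ => measureReal_nonneg) (hFH.mono fun _ h => ⟨h.1, h.2.1⟩)
      (hF.mono fun _ h => h.2.1) (hmH.mono fun x h => ⟨hmH_nonneg x, h⟩)

/-- If `(F, G)` satisfies (DZ4) and `H̄_i(x) ~ c F̄(x)`, then `(H_i, G)` also
satisfies (DZ4). -/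
theorem DZ4_inherited (α c : ℝ) (hα : 0 < α) (hc : 0 < c)
    (μF μG μH : Measure ℝ)
    [IsProbabilityMeasure μF] [IsProbabilityMeasure μG] [IsProbabilityMeasure μH]
    (hF0 : μF (Set.Iio 0) = 0) (hG0 : μG (Set.Iio 0) = 0) (hH0 : μH (Set.Iio 0) = 0)
    (L Li : ℝ → ℝ)
    (hRV : ∀ y : ℝ, 0 < y → Tendsto
      (fun x => (μF (Set.Ioi (x * y))).toReal / (μF (Set.Ioi x)).toReal)
      atTop (𝓝 (y ^ (-α))))
    (hL : ∀ x > 0, (μF (Set.Ioi x)).toReal = x ^ (-α) * L x)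
    (hLi : ∀ x > 0, (μH (Set.Ioi x)).toReal = x ^ (-α) * Li x)
    (hinf : ∫⁻ v, ENNReal.ofReal (v ^ α) ∂μF = ⊤)
    (hGo : (fun x => (μG (Set.Ioi x)).toReal) =o[atTop]
      (fun x => (μF (Set.Ioi x)).toReal / ∫ v in Set.Icc (0:ℝ) x, v ^ α ∂μF))
    (hsup : ∃ M : ℝ, ∀ᶠ x : ℝ in atTop, ∀ y ∈ Set.Icc (Real.sqrt x) x, L y / L x ≤ M)
    (hHtail : Tendsto (fun x => (μH (Set.Ioi x)).toReal / (μF (Set.Ioi x)).toReal)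
      atTop (𝓝 c)) :
    (∃ M : ℝ, ∀ᶠ x : ℝ in atTop, ∀ y ∈ Set.Icc (Real.sqrt x) x, Li y / Li x ≤ M) ∧
    (∃ S : ℝ, (∀ x > 0, (μH (Set.Ioi x)).toReal ≤ S * (μF (Set.Ioi x)).toReal) ∧
      Filter.limsup (fun x => (∫ t in Set.Icc (0:ℝ) x, t ^ α ∂μH) /
        ∫ v in Set.Icc (0:ℝ) x, v ^ α ∂μF) atTop ≤ S) ∧
    Tendsto (fun x => (μG (Set.Ioi x)).toReal *
      (∫ t in Set.Icc (0:ℝ) x, t ^ α ∂μH) / (μH (Set.Ioi x)).toReal)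
      atTop (𝓝 0) :=
  DZ4_inherited_general α c hα hc μF μG μH hF0 hH0 L Li hRV hL hLi hGo hsup hHtail
end
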